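/- (In the actual experiment the all-office strategy has strictly higher expected utility than the canteen-before-9 strategy.) Let kmin = 0, kmax = 6 and N = 5 (arrival times 8:10 am through 9:10 am in 10-minute steps, with 9:00 am corresponding to 5), and let u be uniform with values A = log(0.99), B = 2·log(0.99), C = 2·log(0.01), where log is the natural logarithm (these are the experiment's per-round utilities for canteen coordination, office coordination, and miscoordination or a forbidden canteen choice, at certainty estimate 0.99; note A > B > C). Then the all-office profile has strictly greater expected utility over T than the cut-off profile with cut-off 5; explicitly, 2·log(0.99) > (10·log(0.99) + 4·log(0.01))/12. -/

import Mathlib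

/-- The two actions: `c` (canteen) and `o` (office). -/
inductive Act : Type
  | c : Act
  | o : Act
deriving DecidableEq

open Act

/-- The set of arrival pairs
`T = {(k, k+1) : kmin ≤ k ≤ kmax - 1} ∪ {(k, k-1) : kmin + 1 ≤ k ≤ kmax}`. -/
noncomputable def T (kmin kmax : ℤ) : Finset (ℤ × ℤ) :=
  ((Finset.Icc kmin (kmax - 1)).image (fun k => (k, k + 1))) ∪
  ((Finset.Icc (kmin + 1) kmax).image (fun k => (k, k - 1)))

/-- Subgame `T1 = {(t1,t2) ∈ T : t1 ≡ kmin (mod 2)}`. -/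
noncomputable def T1 (kmin kmax : ℤ) : Finset (ℤ × ℤ) :=
  (T kmin kmax).filter (fun t => t.1 % 2 = kmin % 2)

/-- Subgame `T2 = {(t1,t2) ∈ T : t2 ≡ kmin (mod 2)}`. -/
noncomputable def T2 (kmin kmax : ℤ) : Finset (ℤ × ℤ) :=
  (T kmin kmax).filter (fun t => t.2 % 2 = kmin % 2)

/-- The expected utility of profile `s` over a set `S` of arrival pairs:
`EU_S(s) = (1/|S|) · Σ_{(t1,t2) ∈ S} u_{(t1,t2)}(s_1(t1), s_2(t2))`. -/
noncomputable def EU (u : ℤ × ℤ → Act → Act → ℝ) (s : (ℤ → Act) × (ℤ → Act))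
    (S : Finset (ℤ × ℤ)) : ℝ :=
  (∑ t ∈ S, u t (s.1 t.1) (s.2 t.2)) / S.card

/-- `s` is Pareto optimal over `S` if no profile `s'` has `EU_S(s') > EU_S(s)`. -/
def ParetoOptimal (u : ℤ × ℤ → Act → Act → ℝ) (S : Finset (ℤ × ℤ))
    (s : (ℤ → Act) × (ℤ → Act)) : Prop :=
  ¬ ∃ s' : (ℤ → Act) × (ℤ → Act), EU u s' S > EU u s S

/-- `u` satisfies conditions (U1) and (U2) on the arrival pairs of `T`. -/
def SatisfiesU1U2 (kmin kmax N : ℤ) (u : ℤ × ℤ → Act → Act → ℝ) : Prop :=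
  ∀ t ∈ T kmin kmax,
    (t.1 < N ∧ t.2 < N →
      u t c c > u t o o ∧ u t o o > u t c o ∧ u t c o = u t o c) ∧
    (N ≤ t.1 ∨ N ≤ t.2 →
      u t o o > u t c o ∧ u t c o = u t o c ∧ u t o c = u t c c)

/-- `u` is uniform with values `A > B > C` (the order is assumed separately). -/
def Uniform (kmin kmax N : ℤ) (u : ℤ × ℤ → Act → Act → ℝ) (A B C : ℝ) : Prop :=
  ∀ t ∈ T kmin kmax,
    (t.1 < N ∧ t.2 < N →
      u t c c = A ∧ u t o o = B ∧ u t c o = C ∧ u t o c = C) ∧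
    (N ≤ t.1 ∨ N ≤ t.2 →
      u t o o = B ∧ u t c c = C ∧ u t c o = C ∧ u t o c = C)

/-- The cut-off strategy with cut-off `m`: canteen iff arriving strictly before `m`. -/
def cutoff (m : ℤ) : ℤ → Act := fun k => if k < m then c else o

/-- The all-office strategy. -/
def allOffice : ℤ → Act := fun _ => o

/-! Under the all-office profile every arrival pair pays `B`. Under the cut-off-5 profile the
eight pairs before 9:00 pay `A`, the two pairs straddling 9:00 miscoordinate and pay `C`, and the
two late pairs pay `B`. With `A = log 0.99`, `B = 2 log 0.99`, `C = 2 log 0.01` both inequalities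
then follow from `0.01 < 0.99 ^ 4`. -/

namespace Uniform

variable {kmin kmax N : ℤ} {u : ℤ × ℤ → Act → Act → ℝ} {A B C : ℝ}

theorem office_office (hu : Uniform kmin kmax N u A B C) {t : ℤ × ℤ}
    (ht : t ∈ T kmin kmax) : u t o o = B := by
  rcases lt_or_ge t.1 N with h1 | h1 <;> rcases lt_or_ge t.2 N with h2 | h2
  · exact ((hu t ht).1 ⟨h1, h2⟩).2.1
  all_goals first
    | exact ((hu t ht).2 (Or.inl h1)).1
    | exact ((hu t ht).2 (Or.inr h2)).1

theorem cutoff_payoff (hu : Uniform kmin kmax N u A B C) {t : ℤ × ℤ}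
    (ht : t ∈ T kmin kmax) :
    u t (cutoff N t.1) (cutoff N t.2) =
      if t.1 < N ∧ t.2 < N then A else if N ≤ t.1 ∧ N ≤ t.2 then B else C := by
  unfold cutoff
  rcases lt_or_ge t.1 N with h1 | h1 <;> rcases lt_or_ge t.2 N with h2 | h2
  · simp [h1, h2, ((hu t ht).1 ⟨h1, h2⟩).1]
  · simp [h1, h2, not_lt.2 h2, ((hu t ht).2 (Or.inr h2)).2.2.1]
  · simp [h1, h2, not_lt.2 h1, ((hu t ht).2 (Or.inl h1)).2.2.2]
  · simp [h1, h2, not_lt.2 h1, not_lt.2 h2, ((hu t ht).2 (Or.inl h1)).1]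

theorem EU_allOffice (hu : Uniform kmin kmax N u A B C) (hk : kmin < kmax) :
    EU u (allOffice, allOffice) (T kmin kmax) = B := by
  have hne : (T kmin kmax).Nonempty :=
    ⟨(kmin, kmin + 1), Finset.mem_union_left _ (Finset.mem_image.2
      ⟨kmin, Finset.mem_Icc.2 ⟨le_rfl, by omega⟩, rfl⟩)⟩
  change (∑ t ∈ T kmin kmax, u t o o) / _ = B
  rw [Finset.sum_congr rfl fun t ht => hu.office_office ht, Finset.sum_const,
    nsmul_eq_mul, mul_div_cancel_left₀ _ (by exact_mod_cast hne.card_pos.ne')]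

end Uniform

theorem T_zero_six : T 0 6 = {(0, 1), (1, 2), (2, 3), (3, 4), (4, 5), (5, 6),
    (1, 0), (2, 1), (3, 2), (4, 3), (5, 4), (6, 5)} := by
  decide

theorem Uniform.EU_cutoff_five {u : ℤ × ℤ → Act → Act → ℝ} {A B C : ℝ}
    (hu : Uniform 0 6 5 u A B C) :
    EU u (cutoff 5, cutoff 5) (T 0 6) = (8 * A + 2 * B + 2 * C) / 12 := by
  rw [EU, Finset.sum_congr rfl fun t ht => hu.cutoff_payoff ht, T_zero_six]
  norm_num [Finset.sum_insert]
  ring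

theorem log_0_01_lt_four_mul_log_0_99 : Real.log 0.01 < 4 * Real.log 0.99 := by
  have h := Real.log_pow (0.99 : ℝ) 4
  push_cast at h
  rw [← h]
  exact Real.log_lt_log (by norm_num) (by norm_num)

/-- In the actual experiment (`kmin = 0`, `kmax = 6`, `N = 5`, uniform
utility with values `A = log 0.99 > B = 2·log 0.99 > C = 2·log 0.01`), the all-office
profile has strictly greater expected utility over `T` than the cut-off profile with
cut-off 5; explicitly, `2·log 0.99 > (10·log 0.99 + 4·log 0.01)/12`. -/
theorem stmt_13 (u : ℤ × ℤ → Act → Act → ℝ)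
    (hu : Uniform 0 6 5 u (Real.log 0.99) (2 * Real.log 0.99) (2 * Real.log 0.01)) :
    EU u (allOffice, allOffice) (T 0 6) > EU u (cutoff 5, cutoff 5) (T 0 6) ∧
    2 * Real.log 0.99 > (10 * Real.log 0.99 + 4 * Real.log 0.01) / 12 := by
  have hlog := log_0_01_lt_four_mul_log_0_99
  have hneg : Real.log 0.99 < 0 := Real.log_neg (by norm_num) (by norm_num)
  rw [hu.EU_allOffice (by norm_num), hu.EU_cutoff_five]
  constructor <;> linarith
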